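/- arXiv:1401.0020 — 4 statements merged into one kernel-verified Lean document; each statement's English description precedes it below -/
import Mathlib

section
/- Policy improvement identity: let V be continuously differentiable on R^n, and let u_j, u_{j-1} : R^n → R^m with u_j = -(1/2)R⁻¹gᵀ∇V. Then L(V, u_j)(x) = L(V, u_{j-1})(x) + (u_j(x) - u_{j-1}(x))ᵀR(u_j(x) - u_{j-1}(x)) for all x, where L(V,u) = -∇Vᵀ(f+gu) - q - uᵀRu. Consequently, if L(V, u_{j-1}) ≥ 0 pointwise, then L(V, u_j) ≥ 0 pointwise. -/
/-!
Since `R` is symmetric and `gᵀ∇V = -2 R u_j`, the linear term of `L(V, ·)` is `2 u_jᵀR u`, so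
completing the square gives `L(V, u) = c + u_jᵀR u_j - (u - u_j)ᵀR(u - u_j)` with `c` independent
of `u`. Thus `u_j` maximises `L(V, ·)` pointwise, with the gap measured by the `R`-norm.
-/

open Matrix

/-- The gradient of `V : ℝⁿ → ℝ` at `y`, as a vector. -/
noncomputable def grad {n : ℕ} (V : (Fin n → ℝ) → ℝ) (y : Fin n → ℝ) : Fin n → ℝ :=
  fun i => fderiv ℝ V y (Pi.single i 1)

variable {ι κ α : Type*} [Fintype ι] [Fintype κ] [CommRing α]

theorem Matrix.IsSymm.dotProduct_mulVec_comm {R : Matrix ι ι α} (hR : R.IsSymm) (v w : ι → α) :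
    v ⬝ᵥ R *ᵥ w = w ⬝ᵥ R *ᵥ v := by
  simpa only [hR.eq] using dotProduct_transpose_mulVec R v w

theorem improvement_identity_of_transpose_mulVec_eq {R : Matrix ι ι α} (hR : R.IsSymm)
    {G : Matrix κ ι α} {p v : κ → α} {a : ι → α} (ha : Gᵀ *ᵥ p = (-2 : α) • R *ᵥ a)
    (b : ι → α) :
    -(p ⬝ᵥ (v + G *ᵥ a)) - a ⬝ᵥ R *ᵥ a =
      -(p ⬝ᵥ (v + G *ᵥ b)) - b ⬝ᵥ R *ᵥ b + (a - b) ⬝ᵥ R *ᵥ (a - b) := by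
  have linear_term : ∀ u, p ⬝ᵥ G *ᵥ u = -2 * (u ⬝ᵥ R *ᵥ a) := fun u => by
    rw [dotProduct_mulVec, ← mulVec_transpose, ha, smul_dotProduct, dotProduct_comm, smul_eq_mul]
  simp only [dotProduct_add, linear_term, mulVec_sub, dotProduct_sub, sub_dotProduct]
  rw [hR.dotProduct_mulVec_comm a b]
  ring

theorem policy_improvement_identity_general {n m : ℕ}
    (V : (Fin n → ℝ) → ℝ)
    (f : (Fin n → ℝ) → (Fin n → ℝ))
    (g : (Fin n → ℝ) → Matrix (Fin n) (Fin m) ℝ)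
    (R : Matrix (Fin m) (Fin m) ℝ)
    (hRpd : R.PosDef)
    (q : (Fin n → ℝ) → ℝ)
    -- L(V,u)(x)
    (L : ((Fin n → ℝ) → (Fin m → ℝ)) → (Fin n → ℝ) → ℝ)
    (hL : ∀ u y, L u y = -(grad V y ⬝ᵥ (f y + (g y) *ᵥ u y)) - q y - u y ⬝ᵥ (R *ᵥ u y))
    (uj ujm1 : (Fin n → ℝ) → (Fin m → ℝ))
    (huj : ∀ y, uj y = (-(1/2) : ℝ) • (R⁻¹ *ᵥ ((g y)ᵀ *ᵥ grad V y))) :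
    (∀ x : Fin n → ℝ,
      L uj x = L ujm1 x + (uj x - ujm1 x) ⬝ᵥ (R *ᵥ (uj x - ujm1 x))) ∧
    ((∀ x : Fin n → ℝ, 0 ≤ L ujm1 x) → (∀ x : Fin n → ℝ, 0 ≤ L uj x)) := by
  have hRsymm : R.IsSymm := isHermitian_iff_isSymm.mp hRpd.isHermitian
  have hdet : IsUnit R.det := isUnit_iff_ne_zero.mpr hRpd.det_pos.ne'
  have stationary : ∀ y, (g y)ᵀ *ᵥ grad V y = (-2 : ℝ) • R *ᵥ uj y := fun y => by
    rw [huj, mulVec_smul, mulVec_mulVec, mul_nonsing_inv _ hdet, one_mulVec, smul_smul]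
    norm_num
  have identity : ∀ x, L uj x = L ujm1 x + (uj x - ujm1 x) ⬝ᵥ (R *ᵥ (uj x - ujm1 x)) :=
    fun x => by
      rw [hL, hL]
      linarith [improvement_identity_of_transpose_mulVec_eq hRsymm (v := f x) (stationary x)
        (ujm1 x)]
  refine ⟨identity, fun hL_nonneg x => ?_⟩
  rw [identity x]
  have gap_nonneg := hRpd.posSemidef.dotProduct_mulVec_nonneg (uj x - ujm1 x)
  rw [star_trivial] at gap_nonneg
  exact add_nonneg (hL_nonneg x) gap_nonneg

/-- Policy improvement identity: with `u_j = -(1/2)R⁻¹gᵀ∇V`,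
`L(V,u_j) = L(V,u_{j-1}) + |u_j - u_{j-1}|²_R` pointwise; hence
`L(V,u_{j-1}) ≥ 0` pointwise implies `L(V,u_j) ≥ 0` pointwise. -/
theorem policy_improvement_identity {n m : ℕ}
    (V : (Fin n → ℝ) → ℝ) (hV : ContDiff ℝ 1 V)
    (f : (Fin n → ℝ) → (Fin n → ℝ))
    (g : (Fin n → ℝ) → Matrix (Fin n) (Fin m) ℝ)
    (R : Matrix (Fin m) (Fin m) ℝ)
    (hRsymm : R.IsSymm) (hRpd : R.PosDef)
    (q : (Fin n → ℝ) → ℝ) (hq : q 0 = 0 ∧ ∀ y ≠ 0, 0 < q y)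
    -- L(V,u)(x)
    (L : ((Fin n → ℝ) → (Fin m → ℝ)) → (Fin n → ℝ) → ℝ)
    (hL : ∀ u y, L u y = -(grad V y ⬝ᵥ (f y + (g y) *ᵥ u y)) - q y - u y ⬝ᵥ (R *ᵥ u y))
    (uj ujm1 : (Fin n → ℝ) → (Fin m → ℝ))
    (huj : ∀ y, uj y = (-(1/2) : ℝ) • (R⁻¹ *ᵥ ((g y)ᵀ *ᵥ grad V y))) :
    (∀ x : Fin n → ℝ,
      L uj x = L ujm1 x + (uj x - ujm1 x) ⬝ᵥ (R *ᵥ (uj x - ujm1 x))) ∧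
    ((∀ x : Fin n → ℝ, 0 ≤ L ujm1 x) → (∀ x : Fin n → ℝ, 0 ≤ L uj x)) :=
  policy_improvement_identity_general V f g R hRpd q L hL uj ujm1 huj
end

section
/- Improved-policy nonnegativity: suppose V_i : R^n → R is continuously differentiable and satisfies L(V_i, u_i)(x) = 0 for all x (the policy evaluation equation), and define u_{i+1}(x) = -(1/2)R⁻¹g(x)ᵀ∇V_i(x). Then L(V_i, u_{i+1})(x) = (u_{i+1}(x) - u_i(x))ᵀR(u_{i+1}(x) - u_i(x)) ≥ 0 for all x ∈ R^n. -/
/-!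
Since `g(x)ᵀ∇V_i(x) = -2 R u_{i+1}(x)` and `R` is symmetric, completing the square gives
`L(V_i, u)(x) = c(x) - |u_{i+1}(x) - u(x)|²_R` with `c(x)` independent of `u`. The policy evaluation
equation at `u = u_i` identifies `c(x)` as `|u_{i+1}(x) - u_i(x)|²_R`, which is `L(V_i, u_{i+1})(x)`.
-/

open Matrix

namespace Matrix.IsSymm

variable {ι α : Type*} [Fintype ι] {R : Matrix ι ι α}

theorem dotProduct_mulVec_comm_s4 [CommSemiring α] (hR : R.IsSymm) (a b : ι → α) :
    a ⬝ᵥ (R *ᵥ b) = b ⬝ᵥ (R *ᵥ a) := by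
  rw [dotProduct_mulVec, ← mulVec_transpose, hR.eq, dotProduct_comm]

theorem sub_dotProduct_mulVec_sub [CommRing α] (hR : R.IsSymm) (a b : ι → α) :
    (a - b) ⬝ᵥ (R *ᵥ (a - b)) = a ⬝ᵥ (R *ᵥ a) - 2 * (a ⬝ᵥ (R *ᵥ b)) + b ⬝ᵥ (R *ᵥ b) := by
  rw [mulVec_sub, sub_dotProduct, dotProduct_sub, dotProduct_sub, hR.dotProduct_mulVec_comm_s4 b a]
  ring

theorem nonsing_inv_mulVec_dotProduct_mulVec [DecidableEq ι] [CommRing α] (hR : R.IsSymm)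
    (hdet : IsUnit R.det) (v u : ι → α) : (R⁻¹ *ᵥ v) ⬝ᵥ (R *ᵥ u) = v ⬝ᵥ u := by
  rw [hR.dotProduct_mulVec_comm_s4, mulVec_mulVec, mul_nonsing_inv R hdet,
    one_mulVec, dotProduct_comm]

end Matrix.IsSymm

theorem improved_policy_nonnegativity_general {n m : ℕ}
    (Vi : (Fin n → ℝ) → ℝ)
    (f : (Fin n → ℝ) → (Fin n → ℝ))
    (g : (Fin n → ℝ) → Matrix (Fin n) (Fin m) ℝ)
    (R : Matrix (Fin m) (Fin m) ℝ)
    (hRpd : R.PosDef)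
    (q : (Fin n → ℝ) → ℝ)
    -- L(V,u)(x)
    (L : ((Fin n → ℝ) → (Fin m → ℝ)) → (Fin n → ℝ) → ℝ)
    (hL : ∀ u y, L u y = -(grad Vi y ⬝ᵥ (f y + (g y) *ᵥ u y)) - q y - u y ⬝ᵥ (R *ᵥ u y))
    (ui uip1 : (Fin n → ℝ) → (Fin m → ℝ))
    -- policy evaluation equation
    (heval : ∀ y, L ui y = 0)
    -- policy improvement
    (huip1 : ∀ y, uip1 y = (-(1/2) : ℝ) • (R⁻¹ *ᵥ ((g y)ᵀ *ᵥ grad Vi y))) :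
    ∀ x : Fin n → ℝ,
      L uip1 x = (uip1 x - ui x) ⬝ᵥ (R *ᵥ (uip1 x - ui x)) ∧ 0 ≤ L uip1 x := by
  intro x
  have hR : R.IsSymm := isHermitian_iff_isSymm.mp hRpd.isHermitian
  have hdet : IsUnit R.det := (isUnit_iff_isUnit_det R).mp hRpd.isUnit
  have hcross : ∀ v, grad Vi x ⬝ᵥ (g x *ᵥ v) = -2 * (uip1 x ⬝ᵥ (R *ᵥ v)) := by
    intro v
    rw [huip1, smul_dotProduct, hR.nonsing_inv_mulVec_dotProduct_mulVec hdet, mulVec_transpose,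
      ← dotProduct_mulVec, smul_eq_mul]
    ring
  have hL_sq : ∀ u, L u x = -(grad Vi x ⬝ᵥ f x) - q x + uip1 x ⬝ᵥ (R *ᵥ uip1 x)
      - (uip1 x - u x) ⬝ᵥ (R *ᵥ (uip1 x - u x)) := by
    intro u
    rw [hL, dotProduct_add, hcross, hR.sub_dotProduct_mulVec_sub]
    ring
  have hLuip1 : L uip1 x = (uip1 x - ui x) ⬝ᵥ (R *ᵥ (uip1 x - ui x)) := by
    have hevalx := heval x
    rw [hL_sq] at hevalx ⊢
    rw [sub_self, mulVec_zero, dotProduct_zero]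
    linarith
  refine ⟨hLuip1, ?_⟩
  rw [hLuip1]
  simpa using hRpd.posSemidef.dotProduct_mulVec_nonneg (uip1 x - ui x)

/-- Improved-policy nonnegativity: if `L(V_i,u_i) ≡ 0` and
`u_{i+1} = -(1/2)R⁻¹gᵀ∇V_i`, then
`L(V_i,u_{i+1})(x) = |u_{i+1}(x) - u_i(x)|²_R ≥ 0` for all `x`. -/
theorem improved_policy_nonnegativity {n m : ℕ}
    (Vi : (Fin n → ℝ) → ℝ) (hVi : ContDiff ℝ 1 Vi)
    (f : (Fin n → ℝ) → (Fin n → ℝ))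
    (g : (Fin n → ℝ) → Matrix (Fin n) (Fin m) ℝ)
    (R : Matrix (Fin m) (Fin m) ℝ)
    (hRsymm : R.IsSymm) (hRpd : R.PosDef)
    (q : (Fin n → ℝ) → ℝ) (hq : q 0 = 0 ∧ ∀ y ≠ 0, 0 < q y)
    -- L(V,u)(x)
    (L : ((Fin n → ℝ) → (Fin m → ℝ)) → (Fin n → ℝ) → ℝ)
    (hL : ∀ u y, L u y = -(grad Vi y ⬝ᵥ (f y + (g y) *ᵥ u y)) - q y - u y ⬝ᵥ (R *ᵥ u y))
    (ui uip1 : (Fin n → ℝ) → (Fin m → ℝ))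
    -- policy evaluation equation
    (heval : ∀ y, L ui y = 0)
    -- policy improvement
    (huip1 : ∀ y, uip1 y = (-(1/2) : ℝ) • (R⁻¹ *ᵥ ((g y)ᵀ *ᵥ grad Vi y))) :
    ∀ x : Fin n → ℝ,
      L uip1 x = (uip1 x - ui x) ⬝ᵥ (R *ᵥ (uip1 x - ui x)) ∧ 0 ≤ L uip1 x :=
  improved_policy_nonnegativity_general Vi f g R hRpd q L hL ui uip1 heval huip1
end

section
/- Global asymptotic stability from a feasible relaxed HJB solution: suppose V : R^n → R is continuously differentiable, positive definite, and proper (radially unbounded), satisfies V(0)=0, and H(V)(x) ≤ 0 for all x. Then the origin is a globally asymptotically stable equilibrium of ẋ = f(x) + g(x)ū(x) where ū = -(1/2)R⁻¹gᵀ∇V. -/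
/-! Along a closed-loop trajectory, `d/dt V(x) = ∇V·f - ½ ∇Vᵀ g R⁻¹ gᵀ ∇V`, and feasibility
`H(V) ≤ 0` turns this into `d/dt V(x) ≤ -q(x) - ¼ ∇Vᵀ g R⁻¹ gᵀ ∇V ≤ -q(x)` since `R⁻¹ ≻ 0`.
So `V` is a strict Lyapunov function with rate `q`. As `V` is proper, its sublevel sets are
compact, so small values of `V` force small `‖x‖`; since `V` decreases along trajectories, this
gives stability. If `V(x t)` stayed above some `c > 0`, the trajectory would remain in the
compact set `{c ≤ V ≤ V(x 0)}`, which avoids `0`, so `q` would be bounded below there by some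
`w > 0` and `V(x t) ≤ V(x 0) - w t` would eventually turn negative; this gives attractivity. -/

open Matrix Filter

attribute [local instance] Matrix.normedAddCommGroup

/-- The origin is a globally asymptotically stable equilibrium of `ẋ = F(x)`:
Lyapunov stability together with global attractivity of the origin,
quantified over all solutions of the ODE. -/
def GloballyAsymptoticallyStable {n : ℕ} (F : (Fin n → ℝ) → (Fin n → ℝ)) : Prop :=
  (∀ ε > (0:ℝ), ∃ δ > (0:ℝ), ∀ x : ℝ → (Fin n → ℝ),
      (∀ t, HasDerivAt x (F (x t)) t) → ‖x 0‖ < δ → ∀ t ≥ (0:ℝ), ‖x t‖ < ε) ∧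
  (∀ x : ℝ → (Fin n → ℝ), (∀ t, HasDerivAt x (F (x t)) t) →
      Tendsto x atTop (nhds 0))

open Set Topology

theorem fderiv_apply_eq_grad_dotProduct {n : ℕ} (V : (Fin n → ℝ) → ℝ) (y v : Fin n → ℝ) :
    fderiv ℝ V y v = grad V y ⬝ᵥ v := by
  rw [dotProduct_comm, ← ContinuousLinearMap.coe_coe, LinearMap.pi_apply_eq_sum_univ]
  simp only [ContinuousLinearMap.coe_coe, dotProduct, grad, smul_eq_mul]
  congr! 3 with i
  ext j
  simp [Pi.single_apply, eq_comm]

theorem isCompact_sublevel_of_tendsto_cocompact {X : Type*} [TopologicalSpace X] {V : X → ℝ}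
    (hV : Continuous V) (hproper : Tendsto V (cocompact X) atTop) (c : ℝ) :
    IsCompact {y | V y ≤ c} := by
  obtain ⟨K, hK, hsub⟩ := mem_cocompact'.mp (hproper (Ioi_mem_atTop c))
  exact hK.of_isClosed_subset (isClosed_le hV continuous_const) fun y hy => hsub (by simpa using hy)

section Lyapunov

variable {E : Type*} [NormedAddCommGroup E] {V W : E → ℝ}

theorem exists_pos_forall_norm_lt_of_lt (hV : Continuous V) (hVpos : ∀ y ≠ 0, 0 < V y)
    (hproper : Tendsto V (cocompact E) atTop) {ε : ℝ} (hε : 0 < ε) :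
    ∃ c > 0, ∀ y, V y < c → ‖y‖ < ε := by
  set K := {y | V y ≤ 1} ∩ {y | ε ≤ ‖y‖}
  have hK : IsCompact K := (isCompact_sublevel_of_tendsto_cocompact hV hproper 1).inter_right
    (isClosed_le continuous_const continuous_norm)
  have hVK : ∀ y ∈ K, 0 < V y := fun y hy => hVpos y <| by
    rintro rfl
    have h0 : ε ≤ ‖(0 : E)‖ := hy.2
    exact (norm_zero (E := E) ▸ h0).not_gt hε
  obtain ⟨c, hc, hcK⟩ := hK.exists_forall_le' hV.continuousOn hVK
  refine ⟨min c 1, lt_min hc one_pos, fun y hy => ?_⟩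
  by_contra! hyε
  have := hcK y ⟨(hy.trans_le (min_le_right _ _)).le, hyε⟩
  linarith [min_le_left c 1]

variable [NormedSpace ℝ E] {F : E → E}

theorem fderiv_apply_nonpos_of_le_neg (hV0 : V 0 = 0) (hVpos : ∀ y ≠ 0, 0 < V y)
    (hWpos : ∀ y ≠ 0, 0 < W y) (hdecr : ∀ y, fderiv ℝ V y (F y) ≤ -W y) (y : E) :
    fderiv ℝ V y (F y) ≤ 0 := by
  rcases eq_or_ne y 0 with rfl | hy
  · have hmin : IsLocalMin V 0 := Eventually.of_forall fun y => by
      rcases eq_or_ne y 0 with rfl | hy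
      exacts [le_rfl, hV0 ▸ (hVpos y hy).le]
    simp [hmin.fderiv_eq_zero]
  · exact (hdecr y).trans (neg_nonpos.mpr (hWpos y hy).le)

theorem antitone_comp_of_fderiv_apply_nonpos (hV : Differentiable ℝ V)
    (hdecr : ∀ y, fderiv ℝ V y (F y) ≤ 0) {x : ℝ → E} (hx : ∀ t, HasDerivAt x (F (x t)) t) :
    Antitone (V ∘ x) := by
  have hderiv t := (hV (x t)).hasFDerivAt.comp_hasDerivAt t (hx t)
  exact antitone_of_deriv_nonpos (fun t => (hderiv t).differentiableAt)
    fun t => (hderiv t).deriv ▸ hdecr (x t)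

theorem lyapunov_stable (hV : Differentiable ℝ V) (hV0 : V 0 = 0) (hVpos : ∀ y ≠ 0, 0 < V y)
    (hproper : Tendsto V (cocompact E) atTop) (hdecr : ∀ y, fderiv ℝ V y (F y) ≤ 0) :
    ∀ ε > (0:ℝ), ∃ δ > (0:ℝ), ∀ x : ℝ → E,
      (∀ t, HasDerivAt x (F (x t)) t) → ‖x 0‖ < δ → ∀ t ≥ (0:ℝ), ‖x t‖ < ε := by
  intro ε hε
  obtain ⟨c, hc, hcε⟩ := exists_pos_forall_norm_lt_of_lt hV.continuous hVpos hproper hε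
  have hnear : ∀ᶠ y in 𝓝 0, V y < c :=
    hV.continuous.continuousAt.eventually (gt_mem_nhds (hV0 ▸ hc))
  obtain ⟨δ, hδ, hδc⟩ := Metric.eventually_nhds_iff.mp hnear
  refine ⟨δ, hδ, fun x hx hx0 t ht => hcε _ ?_⟩
  calc V (x t) ≤ V (x 0) := antitone_comp_of_fderiv_apply_nonpos hV hdecr hx ht
    _ < c := hδc (by rwa [dist_zero_right])

theorem exists_comp_lt_of_fderiv_apply_le_neg (hV : Differentiable ℝ V) (hV0 : V 0 = 0)
    (hproper : Tendsto V (cocompact E) atTop) (hW : Continuous W) (hWpos : ∀ y ≠ 0, 0 < W y)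
    (hdecr : ∀ y, fderiv ℝ V y (F y) ≤ -W y) {x : ℝ → E} (hx : ∀ t, HasDerivAt x (F (x t)) t)
    (hanti : Antitone (V ∘ x)) {c : ℝ} (hc : 0 < c) : ∃ t, V (x t) < c := by
  by_contra! hcx
  set K := {y | V y ≤ V (x 0)} ∩ {y | c ≤ V y}
  have hK : IsCompact K :=
    (isCompact_sublevel_of_tendsto_cocompact hV.continuous hproper _).inter_right
      (isClosed_le continuous_const hV.continuous)
  have hWK : ∀ y ∈ K, 0 < W y := fun y hy => hWpos y <| by
    rintro rfl
    have h0 : c ≤ V 0 := hy.2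
    exact (hV0 ▸ h0).not_gt hc
  obtain ⟨w, hw, hwK⟩ := hK.exists_forall_le' hW.continuousOn hWK
  have hderiv t := (hV (x t)).hasFDerivAt.comp_hasDerivAt t (hx t)
  have hdiff : Differentiable ℝ (V ∘ x) := fun t => (hderiv t).differentiableAt
  have hslope : ∀ t ∈ interior (Ici 0), deriv (V ∘ x) t ≤ -w := fun t ht => by
    rw [interior_Ici] at ht
    rw [(hderiv t).deriv]
    exact (hdecr _).trans (neg_le_neg (hwK _ ⟨hanti (le_of_lt ht), hcx t⟩))
  set T := V (x 0) / w
  have hT : 0 ≤ T := div_nonneg (hc.le.trans (hcx 0)) hw.le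
  have hdrop := (convex_Ici 0).image_sub_le_mul_sub_of_deriv_le hdiff.continuous.continuousOn
    hdiff.differentiableOn hslope 0 self_mem_Ici T hT hT
  have hwT : w * T = V (x 0) := mul_div_cancel₀ _ hw.ne'
  simp only [Function.comp_apply, sub_zero] at hdrop
  linarith [hcx T]

theorem tendsto_nhds_zero_of_fderiv_apply_le_neg (hV : Differentiable ℝ V) (hV0 : V 0 = 0)
    (hVpos : ∀ y ≠ 0, 0 < V y) (hproper : Tendsto V (cocompact E) atTop) (hW : Continuous W)
    (hWpos : ∀ y ≠ 0, 0 < W y) (hdecr : ∀ y, fderiv ℝ V y (F y) ≤ -W y) {x : ℝ → E}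
    (hx : ∀ t, HasDerivAt x (F (x t)) t) : Tendsto x atTop (𝓝 0) := by
  have hanti := antitone_comp_of_fderiv_apply_nonpos hV
    (fderiv_apply_nonpos_of_le_neg hV0 hVpos hWpos hdecr) hx
  refine Metric.tendsto_atTop.mpr fun ε hε => ?_
  obtain ⟨c, hc, hcε⟩ := exists_pos_forall_norm_lt_of_lt hV.continuous hVpos hproper hε
  obtain ⟨T, hT⟩ := exists_comp_lt_of_fderiv_apply_le_neg hV hV0 hproper hW hWpos hdecr hx hanti hc
  exact ⟨T, fun t ht => dist_zero_right (x t) ▸ hcε _ ((hanti ht).trans_lt hT)⟩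

end Lyapunov

theorem globallyAsymptoticallyStable_of_fderiv_apply_le_neg {n : ℕ}
    {F : (Fin n → ℝ) → (Fin n → ℝ)} {V W : (Fin n → ℝ) → ℝ} (hV : Differentiable ℝ V)
    (hV0 : V 0 = 0) (hVpos : ∀ y ≠ 0, 0 < V y) (hproper : Tendsto V (cocompact _) atTop)
    (hW : Continuous W) (hWpos : ∀ y ≠ 0, 0 < W y) (hdecr : ∀ y, fderiv ℝ V y (F y) ≤ -W y) :
    GloballyAsymptoticallyStable F :=
  ⟨lyapunov_stable hV hV0 hVpos hproper (fderiv_apply_nonpos_of_le_neg hV0 hVpos hWpos hdecr),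
    fun _ hx => tendsto_nhds_zero_of_fderiv_apply_le_neg hV hV0 hVpos hproper hW hWpos hdecr hx⟩

theorem dotProduct_add_mulVec_feedback_le_neg {n m : ℕ} {R : Matrix (Fin m) (Fin m) ℝ}
    (hR : R.PosDef) (p a : Fin n → ℝ) (G : Matrix (Fin n) (Fin m) ℝ) (b : ℝ)
    (hH : p ⬝ᵥ a + b - (1/4) * (p ⬝ᵥ (G *ᵥ (R⁻¹ *ᵥ (Gᵀ *ᵥ p)))) ≤ 0) :
    p ⬝ᵥ (a + G *ᵥ ((-(1/2) : ℝ) • (R⁻¹ *ᵥ (Gᵀ *ᵥ p)))) ≤ -b := by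
  have hS : 0 ≤ p ⬝ᵥ (G *ᵥ (R⁻¹ *ᵥ (Gᵀ *ᵥ p))) := by
    rw [dotProduct_mulVec, ← mulVec_transpose]
    simpa using hR.inv.posSemidef.dotProduct_mulVec_nonneg (Gᵀ *ᵥ p)
  rw [dotProduct_add, mulVec_smul, dotProduct_smul, smul_eq_mul]
  linarith

theorem gas_from_feasible_relaxed_HJB_general {n m : ℕ}
    (f : (Fin n → ℝ) → (Fin n → ℝ))
    (g : (Fin n → ℝ) → Matrix (Fin n) (Fin m) ℝ)
    (R : Matrix (Fin m) (Fin m) ℝ) (hRpd : R.PosDef)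
    (q : (Fin n → ℝ) → ℝ) (hqcont : Continuous q)
    (hq : q 0 = 0 ∧ ∀ y ≠ 0, 0 < q y)
    (V : (Fin n → ℝ) → ℝ) (hV : ContDiff ℝ 1 V)
    (hV0 : V 0 = 0) (hVpos : ∀ y ≠ 0, 0 < V y)
    (hVproper : Tendsto V (cocompact (Fin n → ℝ)) atTop)
    -- Hamiltonian and feasibility
    (H : (Fin n → ℝ) → ℝ)
    (hH : ∀ y, H y = grad V y ⬝ᵥ f y + q y
      - (1/4) * (grad V y ⬝ᵥ ((g y) *ᵥ (R⁻¹ *ᵥ ((g y)ᵀ *ᵥ grad V y)))))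
    (hHneg : ∀ y, H y ≤ 0)
    -- induced feedback control
    (ubar : (Fin n → ℝ) → (Fin m → ℝ))
    (hubar : ∀ y, ubar y = (-(1/2) : ℝ) • (R⁻¹ *ᵥ ((g y)ᵀ *ᵥ grad V y))) :
    GloballyAsymptoticallyStable (fun y => f y + (g y) *ᵥ ubar y) := by
  refine globallyAsymptoticallyStable_of_fderiv_apply_le_neg (hV.differentiable one_ne_zero)
    hV0 hVpos hVproper hqcont hq.2 fun y => ?_
  rw [fderiv_apply_eq_grad_dotProduct, hubar]
  exact dotProduct_add_mulVec_feedback_le_neg hRpd _ _ _ _ (hH y ▸ hHneg y)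

/-- Global asymptotic stability from a feasible relaxed-HJB solution:
if `V` is `C¹`, positive definite and proper with `H(V) ≤ 0` everywhere, then the
origin is globally asymptotically stable for `ẋ = f(x) + g(x)ū(x)`,
`ū = -(1/2)R⁻¹gᵀ∇V`. -/
theorem gas_from_feasible_relaxed_HJB {n m : ℕ}
    (f : (Fin n → ℝ) → (Fin n → ℝ)) (hfLip : LocallyLipschitz f) (hf0 : f 0 = 0)
    (g : (Fin n → ℝ) → Matrix (Fin n) (Fin m) ℝ)
    (hgLip : LocallyLipschitz g)
    (R : Matrix (Fin m) (Fin m) ℝ) (hRsymm : R.IsSymm) (hRpd : R.PosDef)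
    (q : (Fin n → ℝ) → ℝ) (hqcont : Continuous q)
    (hq : q 0 = 0 ∧ ∀ y ≠ 0, 0 < q y)
    (V : (Fin n → ℝ) → ℝ) (hV : ContDiff ℝ 1 V)
    (hV0 : V 0 = 0) (hVpos : ∀ y ≠ 0, 0 < V y)
    (hVproper : Tendsto V (cocompact (Fin n → ℝ)) atTop)
    -- Hamiltonian and feasibility
    (H : (Fin n → ℝ) → ℝ)
    (hH : ∀ y, H y = grad V y ⬝ᵥ f y + q y
      - (1/4) * (grad V y ⬝ᵥ ((g y) *ᵥ (R⁻¹ *ᵥ ((g y)ᵀ *ᵥ grad V y)))))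
    (hHneg : ∀ y, H y ≤ 0)
    -- induced feedback control
    (ubar : (Fin n → ℝ) → (Fin m → ℝ))
    (hubar : ∀ y, ubar y = (-(1/2) : ℝ) • (R⁻¹ *ᵥ ((g y)ᵀ *ᵥ grad V y))) :
    GloballyAsymptoticallyStable (fun y => f y + (g y) *ᵥ ubar y) :=
  gas_from_feasible_relaxed_HJB_general f g R hRpd q hqcont hq V hV hV0 hVpos hVproper H hH hHneg
    ubar hubar
end

section
/- Cost overestimation by feasible solutions: let V be continuously differentiable, positive definite, and proper, with H(V)(x) ≤ 0 for all x, and ū = -(1/2)R⁻¹gᵀ∇V. Suppose x(·) is the solution of ẋ = f(x) + g(x)ū(x) with x(0) = x₀, and suppose x(T) → 0 as T → ∞. Then for every T > 0, V(x₀) = ∫₀^T [r(x(t), ū(x(t))) - H(V)(x(t))] dt + V(x(T)) ≥ ∫₀^T r(x(t), ū(x(t))) dt + V(x(T)), and hence V(x₀) ≥ J(x₀, ū) := ∫₀^∞ r(x(t), ū(x(t))) dt. -/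
/-! Along the closed loop the feedback `ū` is the stationary point of `u ↦ r(x, u) + ∇V ⬝ g u`,
which turns the definition of `H(V)` into `d/dt V(x(t)) = -(r - H(V))(x(t))`. Integrating over
`[0, T]` gives the identity, `H(V) ≤ 0` the finite-horizon bound, and since `V ≥ 0` the partial
costs stay below `V(x₀)`, which bounds the improper integral. -/

open Matrix Filter MeasureTheory intervalIntegral

theorem ContinuousLinearMap.apply_eq_dotProduct {ι 𝕜 : Type*} [Fintype ι] [DecidableEq ι]
    [CommSemiring 𝕜] [TopologicalSpace 𝕜] (L : (ι → 𝕜) →L[𝕜] 𝕜) (v : ι → 𝕜) :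
    L v = (fun i => L (Pi.single i 1)) ⬝ᵥ v := by
  conv_lhs => rw [← Finset.univ_sum_single v]
  rw [map_sum, dotProduct]
  refine Finset.sum_congr rfl fun i _ => ?_
  rw [mul_comm, ← smul_eq_mul, ← L.map_smul, ← Pi.single_smul, smul_eq_mul, mul_one]

theorem ContDiff.continuous_grad {n : ℕ} {V : (Fin n → ℝ) → ℝ} (hV : ContDiff ℝ 1 V) :
    Continuous (grad V) :=
  continuous_pi fun _ => (hV.continuous_fderiv one_ne_zero).clm_apply continuous_const

theorem HasDerivAt.comp_grad_dotProduct {n : ℕ} {V : (Fin n → ℝ) → ℝ} {x : ℝ → Fin n → ℝ}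
    {x' : Fin n → ℝ} {t : ℝ} (hx : HasDerivAt x x' t) (hV : DifferentiableAt ℝ V (x t)) :
    HasDerivAt (fun s => V (x s)) (grad V (x t) ⬝ᵥ x') t := by
  have h := hV.hasFDerivAt.comp_hasDerivAt t hx
  rwa [ContinuousLinearMap.apply_eq_dotProduct] at h

theorem dotProduct_mulVec_add_dotProduct_mulVec_of_eq_feedback {ι κ K : Type*} [Field K]
    [CharZero K] [Fintype ι] [Fintype κ] [DecidableEq κ] {R : Matrix κ κ K} (hR : IsUnit R)
    (G : Matrix ι κ K) (a : ι → K) {u : κ → K} (hu : u = (-(1/2) : K) • (R⁻¹ *ᵥ (Gᵀ *ᵥ a))) :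
    u ⬝ᵥ (R *ᵥ u) + a ⬝ᵥ (G *ᵥ u) = -(1/4) * (a ⬝ᵥ (G *ᵥ (R⁻¹ *ᵥ (Gᵀ *ᵥ a)))) := by
  have hRs : R *ᵥ (R⁻¹ *ᵥ (Gᵀ *ᵥ a)) = Gᵀ *ᵥ a := by
    rw [mulVec_mulVec, mul_nonsing_inv _ ((isUnit_iff_isUnit_det R).1 hR), one_mulVec]
  have hGs : a ⬝ᵥ (G *ᵥ (R⁻¹ *ᵥ (Gᵀ *ᵥ a))) = (R⁻¹ *ᵥ (Gᵀ *ᵥ a)) ⬝ᵥ (Gᵀ *ᵥ a) := by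
    rw [dotProduct_mulVec, ← mulVec_transpose, dotProduct_comm]
  subst hu
  rw [mulVec_smul, hRs, mulVec_smul, smul_dotProduct, dotProduct_smul, dotProduct_smul, hGs]
  simp only [smul_eq_mul]
  ring

theorem eq_intervalIntegral_add_of_hasDerivAt_neg {φ ℓ : ℝ → ℝ}
    (hφ : ∀ t, HasDerivAt φ (-ℓ t) t) (hℓ : Continuous ℓ) (a b : ℝ) :
    φ a = (∫ t in a..b, ℓ t) + φ b := by
  have := integral_eq_sub_of_hasDerivAt (fun t _ => hφ t) (hℓ.neg.intervalIntegrable a b)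
  rw [intervalIntegral.integral_neg] at this
  linarith

theorem integral_Ioi_le_of_forall_intervalIntegral_le {μ : Measure ℝ} {h : ℝ → ℝ} {a C : ℝ}
    (hC : 0 ≤ C) (hle : ∀ T > a, ∫ t in a..T, h t ∂μ ≤ C) :
    ∫ t in Set.Ioi a, h t ∂μ ≤ C := by
  by_cases hint : IntegrableOn h (Set.Ioi a) μ
  · exact le_of_tendsto (intervalIntegral_tendsto_integral_Ioi a hint tendsto_id)
      ((eventually_gt_atTop a).mono hle)
  · rw [integral_undef hint]
    exact hC

theorem cost_overestimation_by_feasible_solution_general {n m : ℕ}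
    (f : (Fin n → ℝ) → (Fin n → ℝ)) (hfc : Continuous f)
    (g : (Fin n → ℝ) → Matrix (Fin n) (Fin m) ℝ)
    (hgc : ∀ i j, Continuous fun y => g y i j)
    (R : Matrix (Fin m) (Fin m) ℝ) (hRpd : R.PosDef)
    (q : (Fin n → ℝ) → ℝ) (hqc : Continuous q)
    (V : (Fin n → ℝ) → ℝ) (hV : ContDiff ℝ 1 V)
    (hV0 : V 0 = 0) (hVpos : ∀ y ≠ 0, 0 < V y)
    -- Hamiltonian and feasibility
    (H : (Fin n → ℝ) → ℝ)
    (hH : ∀ y, H y = grad V y ⬝ᵥ f y + q y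
      - (1/4) * (grad V y ⬝ᵥ ((g y) *ᵥ (R⁻¹ *ᵥ ((g y)ᵀ *ᵥ grad V y)))))
    (hHneg : ∀ y, H y ≤ 0)
    -- induced feedback control and running cost
    (ubar : (Fin n → ℝ) → (Fin m → ℝ))
    (hubar : ∀ y, ubar y = (-(1/2) : ℝ) • (R⁻¹ *ᵥ ((g y)ᵀ *ᵥ grad V y)))
    (r : (Fin n → ℝ) → (Fin m → ℝ) → ℝ)
    (hr : ∀ y u, r y u = q y + u ⬝ᵥ (R *ᵥ u))
    -- closed-loop trajectory from x₀ converging to the origin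
    (x₀ : Fin n → ℝ) (x : ℝ → (Fin n → ℝ))
    (hsol : ∀ t, HasDerivAt x (f (x t) + (g (x t)) *ᵥ ubar (x t)) t)
    (hx0 : x 0 = x₀) :
    (∀ T > (0:ℝ),
      V x₀ = (∫ t in (0:ℝ)..T, (r (x t) (ubar (x t)) - H (x t))) + V (x T) ∧
      (∫ t in (0:ℝ)..T, r (x t) (ubar (x t))) + V (x T) ≤ V x₀) ∧
    (∫ t in Set.Ioi (0:ℝ), r (x t) (ubar (x t))) ≤ V x₀ := by
  have hVnonneg : ∀ y, 0 ≤ V y := fun y =>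
    (eq_or_ne y 0).elim (fun hy => hy ▸ hV0.ge) fun hy => (hVpos y hy).le
  have hdV : ∀ t, HasDerivAt (fun s => V (x s)) (-(r (x t) (ubar (x t)) - H (x t))) t := by
    intro t
    have := dotProduct_mulVec_add_dotProduct_mulVec_of_eq_feedback hRpd.isUnit (g (x t))
      (grad V (x t)) (hubar (x t))
    convert (hsol t).comp_grad_dotProduct (hV.differentiable one_ne_zero _) using 1
    rw [hr, hH, dotProduct_add]
    linarith
  have hxc : Continuous x := continuous_iff_continuousAt.2 fun t => (hsol t).continuousAt
  have hgradc := hV.continuous_grad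
  have hrc : Continuous fun t => r (x t) (ubar (x t)) := by simp only [hr, hubar]; fun_prop
  have hHc : Continuous fun t => H (x t) := by simp only [hH]; fun_prop
  have hvalue : ∀ T, V x₀ = (∫ t in (0:ℝ)..T, (r (x t) (ubar (x t)) - H (x t))) + V (x T) :=
    hx0 ▸ eq_intervalIntegral_add_of_hasDerivAt_neg hdV (hrc.sub hHc) 0
  have hbound : ∀ T > (0:ℝ), (∫ t in (0:ℝ)..T, r (x t) (ubar (x t))) + V (x T) ≤ V x₀ := by
    intro T hT
    have hmono : (∫ t in (0:ℝ)..T, r (x t) (ubar (x t)))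
        ≤ ∫ t in (0:ℝ)..T, (r (x t) (ubar (x t)) - H (x t)) :=
      integral_mono_on hT.le (hrc.intervalIntegrable 0 T) ((hrc.sub hHc).intervalIntegrable 0 T)
        fun t _ => (le_sub_self_iff _).2 (hHneg (x t))
    linarith [hvalue T]
  refine ⟨fun T hT => ⟨hvalue T, hbound T hT⟩,
    integral_Ioi_le_of_forall_intervalIntegral_le (hVnonneg x₀) fun T hT => ?_⟩
  linarith [hbound T hT, hVnonneg (x T)]

/-- Cost overestimation by feasible solutions: along the closed-loop trajectory of
`ẋ = f + g ū`, `V(x₀) = ∫₀^T [r - H(V)] dt + V(x(T)) ≥ ∫₀^T r dt + V(x(T))`, and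
hence `V(x₀) ≥ J(x₀,ū) = ∫₀^∞ r dt`. -/
theorem cost_overestimation_by_feasible_solution {n m : ℕ}
    (f : (Fin n → ℝ) → (Fin n → ℝ)) (hfc : Continuous f)
    (g : (Fin n → ℝ) → Matrix (Fin n) (Fin m) ℝ)
    (hgc : ∀ i j, Continuous fun y => g y i j)
    (R : Matrix (Fin m) (Fin m) ℝ) (hRsymm : R.IsSymm) (hRpd : R.PosDef)
    (q : (Fin n → ℝ) → ℝ) (hqc : Continuous q)
    (hq : q 0 = 0 ∧ ∀ y ≠ 0, 0 < q y)
    (V : (Fin n → ℝ) → ℝ) (hV : ContDiff ℝ 1 V)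
    (hV0 : V 0 = 0) (hVpos : ∀ y ≠ 0, 0 < V y)
    (hVproper : Tendsto V (cocompact (Fin n → ℝ)) atTop)
    -- Hamiltonian and feasibility
    (H : (Fin n → ℝ) → ℝ)
    (hH : ∀ y, H y = grad V y ⬝ᵥ f y + q y
      - (1/4) * (grad V y ⬝ᵥ ((g y) *ᵥ (R⁻¹ *ᵥ ((g y)ᵀ *ᵥ grad V y)))))
    (hHneg : ∀ y, H y ≤ 0)
    -- induced feedback control and running cost
    (ubar : (Fin n → ℝ) → (Fin m → ℝ))
    (hubar : ∀ y, ubar y = (-(1/2) : ℝ) • (R⁻¹ *ᵥ ((g y)ᵀ *ᵥ grad V y)))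
    (r : (Fin n → ℝ) → (Fin m → ℝ) → ℝ)
    (hr : ∀ y u, r y u = q y + u ⬝ᵥ (R *ᵥ u))
    -- closed-loop trajectory from x₀ converging to the origin
    (x₀ : Fin n → ℝ) (x : ℝ → (Fin n → ℝ))
    (hsol : ∀ t, HasDerivAt x (f (x t) + (g (x t)) *ᵥ ubar (x t)) t)
    (hx0 : x 0 = x₀)
    (hlim : Tendsto x atTop (nhds 0)) :
    (∀ T > (0:ℝ),
      V x₀ = (∫ t in (0:ℝ)..T, (r (x t) (ubar (x t)) - H (x t))) + V (x T) ∧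
      (∫ t in (0:ℝ)..T, r (x t) (ubar (x t))) + V (x T) ≤ V x₀) ∧
    (∫ t in Set.Ioi (0:ℝ), r (x t) (ubar (x t))) ≤ V x₀ :=
  cost_overestimation_by_feasible_solution_general f hfc g hgc R hRpd q hqc V hV hV0 hVpos H hH
    hHneg ubar hubar r hr x₀ x hsol hx0
end
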